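/- arXiv:2212.08357 — 2 statements merged into one kernel-verified Lean document; each statement's English description precedes it below -/
import Mathlib

section
/- Let G be a finite group and let k_r(G) denote the number of real conjugacy classes of G (classes C with C = C^{-1}). Then the number of pairs (g,h) ∈ G² with g²h² = 1 equals |G| · k_r(G). -/
/-!
Twisted Burnside lemma: if `σ` is a `G`-equivariant self-map of a finite `G`-set `X`, the pairs
`(x, g)` with `g • x = σ x` number `|G|` times the orbits `O` with `σ O = O`. Indeed on such
an orbit each `{g | g • x = σ x}` is a coset of the stabilizer of `x`, and `∑_{x ∈ O} |G_x|`
is `|G|`, while on any other orbit there are no such `g` at all.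

Substituting `x = g h` turns `g² h² = 1` into `g x g⁻¹ = x⁻¹`, so the count is the twisted
Burnside count for the conjugation action with `σ` the inversion, whose stable orbits are exactly
the real classes.
-/

namespace MulAction

variable {G X : Type*} [Group G] [MulAction G X]

lemma card_smul_eq_of_mem_orbit {a b : X} (h : b ∈ orbit G a) :
    Nat.card {g : G // g • a = b} = Nat.card (stabilizer G a) := by
  obtain ⟨g₀, rfl⟩ := h
  refine Nat.card_congr
    { toFun g := ⟨g₀⁻¹ * g, by simp [mul_smul, g.2]⟩
      invFun g := ⟨g₀ * g, by simp [mul_smul, mem_stabilizer_iff.mp g.2]⟩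
      left_inv g := by simp
      right_inv g := by simp }

lemma image_orbit (σ : X →[G] X) (x : X) : σ '' orbit G x = orbit G (σ x) := by
  simp only [orbit, ← Set.range_comp]
  congr 1
  funext g
  exact map_smul σ g x

lemma orbitRel.Quotient.image_orbit_eq_iff (σ : X →[G] X) {ω : orbitRel.Quotient G X} {x : X}
    (hx : x ∈ ω.orbit) : σ '' ω.orbit = ω.orbit ↔ σ x ∈ MulAction.orbit G x := by
  obtain rfl := orbitRel.Quotient.mem_orbit.mp hx
  rw [orbitRel.Quotient.orbit_mk, image_orbit, orbit_eq_iff]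

lemma card_sigma_orbit_stabilizer (ω : orbitRel.Quotient G X) :
    Nat.card (Σ x : ω.orbit, stabilizer G (x : X)) = Nat.card G := by
  induction ω using Quotient.inductionOn' with | h a => ?_
  calc Nat.card (Σ x : orbit G a, stabilizer G (x : X))
      = Nat.card (orbit G a × stabilizer G a) :=
        Nat.card_congr <| (Equiv.sigmaCongrRight fun x =>
          (stabilizerEquivStabilizerOfOrbitRel x.2).toEquiv).trans (Equiv.sigmaEquivProd _ _)
    _ = Nat.card G := Nat.card_congr (orbitProdStabilizerEquivGroup G a)

lemma card_sigma_orbit_smul_eq [Finite G] [Finite X] (σ : X →[G] X)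
    (ω : orbitRel.Quotient G X) :
    Nat.card (Σ x : ω.orbit, {g : G // g • (x : X) = σ x}) =
      if σ '' ω.orbit = ω.orbit then Nat.card G else 0 := by
  classical
  have := Fintype.ofFinite X
  rw [Nat.card_sigma]
  split_ifs with h
  · rw [← card_sigma_orbit_stabilizer ω, Nat.card_sigma]
    exact Finset.sum_congr rfl fun x _ =>
      card_smul_eq_of_mem_orbit ((orbitRel.Quotient.image_orbit_eq_iff σ x.2).mp h)
  · refine Finset.sum_eq_zero fun x _ => Nat.card_eq_zero.mpr (.inl ⟨fun g => h ?_⟩)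
    exact (orbitRel.Quotient.image_orbit_eq_iff σ x.2).mpr ⟨g.1, g.2⟩

theorem card_smul_eq_apply_eq [Finite G] [Finite X] (σ : X →[G] X) :
    Nat.card {p : X × G // p.2 • p.1 = σ p.1} =
      Nat.card {ω : orbitRel.Quotient G X // σ '' ω.orbit = ω.orbit} * Nat.card G := by
  classical
  have := Fintype.ofFinite X
  calc Nat.card {p : X × G // p.2 • p.1 = σ p.1}
      = Nat.card (Σ ω : orbitRel.Quotient G X, Σ x : ω.orbit,
          {g : G // g • (x : X) = σ x}) :=
        Nat.card_congr <|
          (Equiv.subtypeProdEquivSigmaSubtype fun x (g : G) => g • x = σ x).trans <|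
          (selfEquivSigmaOrbits' G X).sigmaCongrLeft'.trans <| Equiv.sigmaAssoc
            fun (ω : orbitRel.Quotient G X) (x : ω.orbit) => {g : G // g • (x : X) = σ x}
    _ = ∑ ω : orbitRel.Quotient G X, if σ '' ω.orbit = ω.orbit then Nat.card G else 0 := by
        simp only [Nat.card_sigma, ← card_sigma_orbit_smul_eq]
    _ = _ := by
        rw [Finset.sum_ite, Finset.sum_const_zero, add_zero, Finset.sum_const, smul_eq_mul,
          ← Fintype.card_subtype, ← Nat.card_eq_fintype_card]

end MulAction

open MulAction

def ConjAct.invMulActionHom (G : Type*) [Group G] : G →[ConjAct G] G where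
  toFun := (·⁻¹)
  map_smul' g x := (smul_inv' g x).symm

section

variable {G : Type*} [Group G]

lemma card_sq_mul_sq_eq_one_eq_card_smul_eq_inv :
    Nat.card {p : G × G // p.1 ^ 2 * p.2 ^ 2 = 1} =
      Nat.card {p : G × ConjAct G // p.2 • p.1 = p.1⁻¹} := by
  refine Nat.card_congr <| Equiv.subtypeEquiv
    { toFun p := (p.1 * p.2, ConjAct.toConjAct p.1)
      invFun q := (ConjAct.ofConjAct q.2, (ConjAct.ofConjAct q.2)⁻¹ * q.1)
      left_inv p := by simp
      right_inv q := by simp } fun ⟨g, h⟩ => ?_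
  dsimp only [Equiv.coe_fn_mk]
  rw [ConjAct.toConjAct_smul, eq_inv_iff_mul_eq_one,
    show g * (g * h) * g⁻¹ * (g * h) = g ^ 2 * h ^ 2 by rw [sq, sq]; group]

lemma card_inv_stable_orbits_conjAct_eq_card_real_conjClasses :
    Nat.card {ω : orbitRel.Quotient (ConjAct G) G // (·⁻¹) '' ω.orbit = ω.orbit} =
      Nat.card {c : ConjClasses G // c.carrier⁻¹ = c.carrier} := by
  refine Nat.card_congr <| Equiv.subtypeEquiv
    (Quotient.congrRight fun a b => by rw [ConjAct.orbitRel_conjAct]; rfl) fun ω => ?_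
  induction ω using Quotient.inductionOn' with | h a => ?_
  rw [orbitRel.Quotient.orbit_mk, ConjAct.orbit_eq_carrier_conjClasses,
    Set.image_inv_eq_inv]
  rfl

end

/-- The number of pairs `(g,h)` with `g²h² = 1` equals `|G|` times the number of real
conjugacy classes of `G`. -/
theorem stmt_3 (G : Type*) [Group G] [Fintype G] :
    Nat.card {p : G × G // p.1 ^ 2 * p.2 ^ 2 = 1} =
      Fintype.card G * Nat.card {c : ConjClasses G // c.carrier⁻¹ = c.carrier} := by
  calc Nat.card {p : G × G // p.1 ^ 2 * p.2 ^ 2 = 1}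
      = Nat.card {p : G × ConjAct G // p.2 • p.1 = ConjAct.invMulActionHom G p.1} :=
        card_sq_mul_sq_eq_one_eq_card_smul_eq_inv
    _ = Nat.card {ω : orbitRel.Quotient (ConjAct G) G //
          ConjAct.invMulActionHom G '' ω.orbit = ω.orbit} * Nat.card (ConjAct G) :=
        card_smul_eq_apply_eq _
    _ = _ := by
        rw [mul_comm, Nat.card_eq_fintype_card, ConjAct.card]
        exact congrArg _ card_inv_stable_orbits_conjAct_eq_card_real_conjClasses
end

section
/- Let G be a finite group, N = ⟨g² : g ∈ G⟩ the subgroup generated by all squares, and s(n) = |{(g₁,…,gₙ) ∈ Gⁿ : g₁²⋯gₙ² = 1}|. Then lim_{n→∞} s(n)/|G|^{n-1} = |G/N|. -/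
/-!
Let `p n` be the distribution of `g₁² ⋯ gₙ²` for independent uniform `gᵢ ∈ G`. It lives on `N`,
`p (m + n)` is the convolution of `p m` and `p n`, and `s(n) / |G|^(n-1) = |G| · p n 1`.
Since `1 = 1²` the supports of the `p n` increase, and since every element of the finite group `N`
is a product of squares, some `p k` is bounded below on `N` by an `ε > 0`. Doeblin's argument:
convolving with `p k` contracts the sup-distance to the uniform distribution on `N` by the factor
`1 - ε |N|`, so `p n 1 → 1 / |N|` and `s(n) / |G|^(n-1) → |G| / |N| = |G : N|`.
-/

open Finset Filter Topology

section ProbConvSemigroup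

variable {K : Type*} [Group K] [Fintype K]

structure IsProbConvSemigroup (p : ℕ → K → ℝ) : Prop where
  add_apply : ∀ m n x, p (m + n) x = ∑ y, p m y * p n (y⁻¹ * x)
  nonneg : ∀ n x, 0 ≤ p n x
  sum_eq_one : ∀ n, ∑ x, p n x = 1

namespace IsProbConvSemigroup

variable {p : ℕ → K → ℝ}

lemma sum_apply_inv_mul (hp : IsProbConvSemigroup p) (n : ℕ) (x : K) :
    ∑ y, p n (y⁻¹ * x) = 1 :=
  (Fintype.sum_equiv ((Equiv.inv K).trans (Equiv.mulRight x)) _ _ fun _ => rfl).trans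
    (hp.sum_eq_one n)

lemma mul_card_le_one (hp : IsProbConvSemigroup p) {j : ℕ} {ε : ℝ} (hε : ∀ y, ε ≤ p j y) :
    ε * Fintype.card K ≤ 1 := by
  simpa [mul_comm, hp.sum_eq_one] using card_nsmul_le_sum univ (p j) ε fun y _ => hε y

lemma norm_sub_uniform_add_le (hp : IsProbConvSemigroup p) {j : ℕ} {ε : ℝ}
    (hε : ∀ y, ε ≤ p j y) (n : ℕ) :
    ‖p (j + n) - fun _ => (Fintype.card K : ℝ)⁻¹‖ ≤
      (1 - ε * Fintype.card K) * ‖p n - fun _ => (Fintype.card K : ℝ)⁻¹‖ := by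
  set c : ℝ := (Fintype.card K : ℝ)⁻¹
  have hc : c * Fintype.card K = 1 := inv_mul_cancel₀ (by positivity)
  refine (pi_norm_le_iff_of_nonneg
    (mul_nonneg (sub_nonneg.2 (hp.mul_card_le_one hε)) (norm_nonneg _))).2 fun x => ?_
  -- subtracting `ε` is free: `∑ y, p n (y⁻¹ * x)` and `∑ y, c` both equal `1`
  have key : p (j + n) x - c = ∑ y, (p j y - ε) * (p n (y⁻¹ * x) - c) := by
    simp only [sub_mul, mul_sub, sum_sub_distrib, ← mul_sum, ← sum_mul, ← hp.add_apply,
      hp.sum_eq_one, hp.sum_apply_inv_mul, sum_const, card_univ, nsmul_eq_mul]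
    linear_combination (-ε) * hc
  rw [Pi.sub_apply, Real.norm_eq_abs, key]
  calc |∑ y, (p j y - ε) * (p n (y⁻¹ * x) - c)|
      ≤ ∑ y, (p j y - ε) * ‖p n - fun _ => c‖ := by
        refine (abs_sum_le_sum_abs _ _).trans (sum_le_sum fun y _ => ?_)
        rw [abs_mul, abs_of_nonneg (sub_nonneg.2 (hε y))]
        exact mul_le_mul_of_nonneg_left (norm_le_pi_norm (p n - fun _ => c) (y⁻¹ * x))
          (sub_nonneg.2 (hε y))
    _ = (1 - ε * Fintype.card K) * ‖p n - fun _ => c‖ := by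
        rw [← sum_mul, sum_sub_distrib, hp.sum_eq_one, sum_const, card_univ, nsmul_eq_mul,
          mul_comm ε]

lemma tendsto_uniform (hp : IsProbConvSemigroup p) {k : ℕ} (hk : 0 < k) {ε : ℝ} (hε0 : 0 < ε)
    (hε : ∀ y, ε ≤ p k y) : Tendsto p atTop (𝓝 fun _ => (Fintype.card K : ℝ)⁻¹) := by
  set u : K → ℝ := fun _ => (Fintype.card K : ℝ)⁻¹
  set θ := 1 - ε * Fintype.card K
  have hθ0 : 0 ≤ θ := sub_nonneg.2 (hp.mul_card_le_one hε)
  have hθ1 : θ < 1 := by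
    have : 0 < ε * Fintype.card K := by positivity
    linarith
  have hdecay (r m : ℕ) : ‖p (r + k * m) - u‖ ≤ θ ^ m * ‖p 0 - u‖ := by
    induction m with
    | zero => simpa using hp.norm_sub_uniform_add_le (j := r) (ε := 0) (hp.nonneg r) 0
    | succ m ih =>
      calc ‖p (r + k * (m + 1)) - u‖ = ‖p (k + (r + k * m)) - u‖ := by ring_nf
        _ ≤ θ * ‖p (r + k * m) - u‖ := hp.norm_sub_uniform_add_le hε _
        _ ≤ θ * (θ ^ m * ‖p 0 - u‖) := by gcongr
        _ = θ ^ (m + 1) * ‖p 0 - u‖ := by ring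
  rw [tendsto_iff_norm_sub_tendsto_zero]
  refine squeeze_zero (fun n => norm_nonneg _)
    (fun n => by simpa only [Nat.mod_add_div] using hdecay (n % k) (n / k)) ?_
  simpa using ((tendsto_pow_atTop_nhds_zero_of_lt_one hθ0 hθ1).comp
    (Nat.tendsto_div_const_atTop hk.ne')).mul_const ‖p 0 - u‖

end IsProbConvSemigroup

end ProbConvSemigroup

section WalkCount

variable {α K : Type*} [Group K] (f : α → K)

def wordProd {n : ℕ} (v : Fin n → α) : K := ((List.ofFn v).map f).prod

lemma wordProd_append {m n : ℕ} (u : Fin m → α) (w : Fin n → α) :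
    wordProd f (Fin.append u w) = wordProd f u * wordProd f w := by
  simp [wordProd]

lemma wordProd_cons {n : ℕ} (a : α) (v : Fin n → α) :
    wordProd f (Fin.cons a v : Fin (n + 1) → α) = f a * wordProd f v := by
  simp [wordProd, List.ofFn_succ]

lemma Subgroup.coe_wordProd {G : Type*} [Group G] {H : Subgroup G} (f : α → H) {n : ℕ}
    (v : Fin n → α) : ((wordProd f v : H) : G) = wordProd (fun a => (f a : G)) v := by
  simp [wordProd, Function.comp_def]

variable [Fintype α] [DecidableEq K]

def walkCount (n : ℕ) (x : K) : ℕ := #{v : Fin n → α | wordProd f v = x}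

lemma walkCount_add [Fintype K] (m n : ℕ) (x : K) :
    walkCount f (m + n) x = ∑ y, walkCount f m y * walkCount f n (y⁻¹ * x) := by
  calc walkCount f (m + n) x
      = #{q : (Fin m → α) × (Fin n → α) | wordProd f q.1 * wordProd f q.2 = x} :=
        card_equiv (Fin.appendEquiv m n).symm
          (by simp [← wordProd_append, Fin.append_castAdd_natAdd])
    _ = ∑ y, #(({u | wordProd f u = y} : Finset (Fin m → α)) ×ˢ
          ({w | wordProd f w = y⁻¹ * x} : Finset (Fin n → α))) := by
        rw [card_eq_sum_card_fiberwise (f := fun q => wordProd f q.1) (t := univ) (by simp)]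
        refine sum_congr rfl fun y _ => ?_
        rw [← filter_product, univ_product_univ, filter_filter]
        congr 2 with q
        constructor
        · rintro ⟨h, rfl⟩; exact ⟨rfl, by rw [← h, inv_mul_cancel_left]⟩
        · rintro ⟨rfl, h⟩; exact ⟨by rw [h, mul_inv_cancel_left], rfl⟩
    _ = _ := by simp only [card_product, walkCount]

lemma sum_walkCount [Fintype K] (n : ℕ) : ∑ x, walkCount f n x = Fintype.card α ^ n := by
  simp only [walkCount]
  rw [← card_eq_sum_card_fiberwise (fun _ _ => mem_univ _)]
  simp

lemma walkCount_monotone (h1 : 1 ∈ Set.range f) (x : K) : Monotone (walkCount f · x) := by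
  obtain ⟨a, ha⟩ := h1
  refine monotone_nat_of_le_succ fun n => card_le_card_of_injOn
    (fun v : Fin n → α => (Fin.cons a v : Fin (n + 1) → α)) ?_ ?_
  · intro v hv
    simp_all [wordProd_cons]
  · exact (Fin.cons_right_injective (α := fun _ => α) a).injOn

lemma exists_walkCount_pos {x : K} (hx : x ∈ Submonoid.closure (Set.range f)) :
    ∃ n, 0 < walkCount f n x := by
  rw [← FreeMonoid.mrange_lift] at hx
  obtain ⟨w, rfl⟩ := hx
  exact ⟨w.toList.length, card_pos.2 ⟨w.toList.get, by
    simp [wordProd, FreeMonoid.lift_apply, -List.map_ofFn]⟩⟩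

lemma eventually_walkCount_pos [Finite K] (hf : Subgroup.closure (Set.range f) = ⊤)
    (h1 : 1 ∈ Set.range f) : ∀ᶠ n in atTop, ∀ x, 0 < walkCount f n x := by
  have hmem (x : K) : x ∈ Submonoid.closure (Set.range f) := by
    rw [← Subgroup.closure_toSubmonoid_of_finite, hf]; trivial
  choose N hN using fun x => exists_walkCount_pos f (hmem x)
  exact eventually_all.2 fun x =>
    eventually_atTop.2 ⟨N x, fun n hn => (hN x).trans_le (walkCount_monotone f h1 x hn)⟩

lemma isProbConvSemigroup_walkCount [Fintype K] [Nonempty α] :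
    IsProbConvSemigroup fun n x => (walkCount f n x : ℝ) / Fintype.card α ^ n where
  add_apply m n x := by
    simp only [walkCount_add f m n x, pow_add, Nat.cast_sum, Nat.cast_mul, sum_div]
    exact sum_congr rfl fun y _ => by field_simp
  nonneg n x := by positivity
  sum_eq_one n := by
    rw [← sum_div, ← Nat.cast_sum, sum_walkCount, Nat.cast_pow, div_self (by positivity)]

end WalkCount

lemma Subgroup.closure_range_mk_closure {α G : Type*} [Group G] (f : α → G) :
    closure (Set.range fun a => (⟨f a, subset_closure (Set.mem_range_self a)⟩ :
      closure (Set.range f))) = ⊤ := by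
  convert closure_closure_coe_preimage (k := Set.range f)
  ext x
  simp [Subtype.ext_iff]

/-- With `N = ⟨g² : g ∈ G⟩`, we have `lim_{n→∞} s(n)/|G|^{n-1} = |G/N|`. -/
theorem stmt_13 {G : Type} [Group G] [Fintype G] :
    Filter.Tendsto
      (fun n : ℕ => (Nat.card {v : Fin n → G // ((List.ofFn v).map fun g => g ^ 2).prod = 1} : ℝ) /
        (Fintype.card G : ℝ) ^ ((n : ℤ) - 1))
      Filter.atTop
      (nhds ((Subgroup.closure (Set.range fun g : G => g ^ 2)).index : ℝ)) := by
  classical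
  set N := Subgroup.closure (Set.range fun g : G => g ^ 2)
  let sq : G → N := fun g => ⟨g ^ 2, Subgroup.subset_closure (Set.mem_range_self g)⟩
  have h1 : (1 : N) ∈ Set.range sq := ⟨1, by ext; simp [sq]⟩
  obtain ⟨k, hk, hk0⟩ := ((eventually_walkCount_pos sq
    (Subgroup.closure_range_mk_closure _) h1).and (eventually_gt_atTop 0)).exists
  have hlim := (isProbConvSemigroup_walkCount sq).tendsto_uniform hk0
    (ε := 1 / Fintype.card G ^ k) (by positivity) fun x => by
      gcongr; exact_mod_cast hk x
  have hcount (n : ℕ) : Nat.card {v : Fin n → G // ((List.ofFn v).map fun g => g ^ 2).prod = 1} =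
      walkCount sq n 1 := by
    rw [Nat.card_eq_fintype_card, Fintype.card_subtype, walkCount]
    congr 1 with v
    rw [mem_filter_univ, mem_filter_univ, ← OneMemClass.coe_eq_one, Subgroup.coe_wordProd]
    rfl
  have hindex : (N.index : ℝ) = Fintype.card G * (Fintype.card N : ℝ)⁻¹ := by
    rw [← Nat.card_eq_fintype_card, ← Nat.card_eq_fintype_card, ← N.card_mul_index]
    push_cast
    field_simp
  rw [hindex]
  refine ((tendsto_pi_nhds.1 hlim 1).const_mul (Fintype.card G : ℝ)).congr fun n => ?_
  rw [hcount, zpow_sub₀ (by positivity), zpow_natCast, zpow_one]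
  field_simp
end
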